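/- arXiv:1706.08424 — 4 statements merged into one kernel-verified Lean document; each statement's English description precedes it below -/
import Mathlib

section
/- For every integer b ≥ 2 there exists a constant c_b > 0, depending only on b, such that for every ε > 0 there exists N₀ with the following property: for every integer N ≥ N₀, the number of integers n with 1 ≤ n ≤ N for which some digit d ∈ {0, 1, …, b − 1} satisfies |(number of occurrences of d in the base-b representation of n)/(number of base-b digits of n) − 1/b| ≥ ε is at most N^{1 − c_b ε²}. -/
/-!
Fix a digit `d`. Summing `∏ᵢ exp (t · [f i = d])` over all strings `f` of length `k` gives
`(exp t - 1 + b) ^ k ≤ b ^ k · exp (k (t / b + t²))` for `|t| ≤ 1`, so Chernoff's bound with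
`t = ± ε / 2` leaves at most `2 b ^ k exp (-k ε² / 4)` strings whose frequency of `d` is `ε`-far
from `1 / b`; numbers with `k` digits inject into these strings. Summing over the lengths
`k ≤ K` of the numbers up to `N` and over `d` gives at most `2 b² K N ^ (1 - ε² / (4 log b))`,
because `N < b ^ K ≤ b N`, and `K = O(log N)` is absorbed by `N ^ (ε² / (8 log b))`.
For `ε > 1` nothing deviates by `ε`.
-/

open Finset Real Filter Asymptotics

section Strings

variable {α : Type*} [Fintype α] [DecidableEq α]

theorem sum_exp_mul_card_filter_eq (k : ℕ) (a : α) (t : ℝ) :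
    ∑ f : Fin k → α, exp (t * #{i | f i = a}) = (exp t - 1 + Fintype.card α) ^ k := by
  have hprod (f : Fin k → α) :
      exp (t * #{i | f i = a}) = ∏ i, if f i = a then exp t else 1 := by
    rw [prod_ite, prod_const_one, mul_one, prod_const, ← exp_nat_mul, mul_comm]
  have hsum : ∑ x : α, (if x = a then exp t else 1) = exp t - 1 + Fintype.card α := by
    have (x : α) : (if x = a then exp t else 1) = (if x = a then exp t - 1 else 0) + 1 := by
      split_ifs <;> ring
    simp only [this, sum_add_distrib, sum_ite_eq', mem_univ, if_true, sum_const, card_univ,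
      nsmul_eq_mul, mul_one]
  simp_rw [hprod, ← Fintype.prod_sum (fun (_ : Fin k) (x : α) => if x = a then exp t else 1),
    hsum, prod_const, card_univ, Fintype.card_fin]

theorem exp_sub_one_add_le_mul_exp {B t : ℝ} (hB : 1 ≤ B) (ht : |t| ≤ 1) :
    exp t - 1 + B ≤ B * exp (t / B + t ^ 2) := by
  have hexp : exp t - 1 - t ≤ t ^ 2 := (abs_le.1 (abs_exp_sub_one_sub_id_le ht)).2
  have hlin : B * (t / B + t ^ 2 + 1) ≤ B * exp (t / B + t ^ 2) :=
    mul_le_mul_of_nonneg_left (add_one_le_exp _) (by linarith)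
  have hB' : B * (t / B + t ^ 2 + 1) = t + B * t ^ 2 + B := by field_simp
  nlinarith [sq_nonneg t]

theorem sum_exp_mul_card_filter_sub_le (k : ℕ) (a : α) {t : ℝ} (ht : |t| ≤ 1) :
    ∑ f : Fin k → α, exp (t * (#{i | f i = a} - k / Fintype.card α)) ≤
      Fintype.card α ^ k * exp (k * t ^ 2) := by
  set B : ℝ := (Fintype.card α : ℝ)
  have hB : 1 ≤ B := Nat.one_le_cast.2 (Fintype.card_pos_iff.2 ⟨a⟩)
  have hmgf_nonneg : 0 ≤ exp t - 1 + B := by linarith [exp_pos t]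
  calc ∑ f : Fin k → α, exp (t * (#{i | f i = a} - k / B))
      = exp (-(t * k / B)) * (exp t - 1 + B) ^ k := by
        rw [← sum_exp_mul_card_filter_eq, mul_sum]
        refine sum_congr rfl fun f _ => ?_
        rw [← exp_add]
        ring_nf
    _ ≤ exp (-(t * k / B)) * (B * exp (t / B + t ^ 2)) ^ k := by
        gcongr
        exact exp_sub_one_add_le_mul_exp hB ht
    _ = B ^ k * exp (k * t ^ 2) := by
        rw [mul_pow, ← exp_nat_mul, mul_left_comm, ← exp_add]
        congr 2
        field_simp
        ring

theorem card_filter_le_abs_card_filter_sub_le (k : ℕ) (a : α) {ε : ℝ} (hε₀ : 0 ≤ ε)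
    (hε₂ : ε ≤ 2) :
    (#{f : Fin k → α | k * ε ≤ |(#{i | f i = a} : ℝ) - k / Fintype.card α|} : ℝ) ≤
      2 * Fintype.card α ^ k * exp (-(k * ε ^ 2 / 4)) := by
  set X : (Fin k → α) → ℝ := fun f => #{i | f i = a} - k / Fintype.card α
  set S := ({f : Fin k → α | k * ε ≤ |X f|} : Finset _)
  have ht : |ε / 2| ≤ 1 := by rw [abs_of_nonneg (by positivity)]; linarith
  have hk : (0 : ℝ) ≤ k := k.cast_nonneg
  -- whichever sign `X f` has, one of the two exponential moments picks up `exp (ε / 2 * |X f|)`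
  have hS (f) (hf : f ∈ S) :
      exp (k * ε ^ 2 / 2) ≤ exp (ε / 2 * X f) + exp (-(ε / 2) * X f) := by
    have hdev : k * ε ^ 2 / 2 ≤ ε / 2 * |X f| := by
      have := (mem_filter.1 hf).2
      nlinarith
    rcases abs_cases (X f) with ⟨habs, -⟩ | ⟨habs, -⟩ <;> rw [habs] at hdev
    · linarith [exp_le_exp.2 hdev, exp_pos (-(ε / 2) * X f)]
    · have : k * ε ^ 2 / 2 ≤ -(ε / 2) * X f := by linarith
      linarith [exp_le_exp.2 this, exp_pos (ε / 2 * X f)]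
  have hmom (t : ℝ) (ht : |t| ≤ 1) : ∑ f, exp (t * X f) ≤ Fintype.card α ^ k * exp (k * t ^ 2) :=
    sum_exp_mul_card_filter_sub_le k a ht
  have hsum : (#S : ℝ) * exp (k * ε ^ 2 / 2) ≤ 2 * Fintype.card α ^ k * exp (k * ε ^ 2 / 4) :=
    calc (#S : ℝ) * exp (k * ε ^ 2 / 2)
        ≤ ∑ f ∈ S, (exp (ε / 2 * X f) + exp (-(ε / 2) * X f)) := by
          simpa using card_nsmul_le_sum S _ _ hS
      _ ≤ ∑ f, (exp (ε / 2 * X f) + exp (-(ε / 2) * X f)) :=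
          sum_le_sum_of_subset_of_nonneg (subset_univ S) fun f _ _ => by positivity
      _ ≤ 2 * Fintype.card α ^ k * exp (k * ε ^ 2 / 4) := by
          rw [sum_add_distrib]
          have h₁ := hmom (ε / 2) ht
          have h₂ := hmom (-(ε / 2)) (by rwa [abs_neg])
          rw [neg_sq] at h₂
          rw [show k * ε ^ 2 / 4 = k * (ε / 2) ^ 2 by ring]
          linarith
  rwa [← le_div_iff₀ (exp_pos _), mul_div_assoc, ← exp_sub,
    show k * ε ^ 2 / 4 - k * ε ^ 2 / 2 = -(k * ε ^ 2 / 4) by ring] at hsum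

end Strings

theorem Nat.count_digits_eq_card_filter {b n k : ℕ} (hb : 1 < b) (h : (digits b n).length = k)
    (d : ℕ) : (digits b n).count d = #{i : Fin k | n / b ^ (i : ℕ) % b = d} := by
  refine (Fin.card_filter_univ_eq_vector_get_eq_count d ⟨digits b n, h⟩).symm.trans ?_
  congr! 3 with i
  rw [← getD_digits n i hb, List.getD_eq_getElem _ _ (h ▸ i.isLt)]
  rfl

noncomputable def digitDeviation (b d n : ℕ) : ℝ :=
  |((Nat.digits b n).count d : ℝ) / ((Nat.digits b n).length : ℝ) - 1 / (b : ℝ)|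

theorem digitDeviation_lt_one {b : ℕ} (hb : 1 < b) (d n : ℕ) : digitDeviation b d n < 1 := by
  have hfreq₀ : (0 : ℝ) ≤ ((Nat.digits b n).count d : ℝ) / (Nat.digits b n).length := by positivity
  have hfreq₁ : ((Nat.digits b n).count d : ℝ) / (Nat.digits b n).length ≤ 1 :=
    div_le_one_of_le₀ (by exact_mod_cast List.count_le_length) (Nat.cast_nonneg _)
  have hb' : (1 : ℝ) < b := by exact_mod_cast hb
  have hinv₀ : (0 : ℝ) < 1 / b := by positivity
  have hinv₁ : 1 / (b : ℝ) < 1 := (div_lt_one (by positivity)).2 hb'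
  exact abs_sub_lt_iff.2 ⟨by linarith, by linarith⟩

theorem card_le_of_le_digitDeviation {b k d : ℕ} (hb : 1 < b) (hd : d < b) {ε : ℝ}
    (hε₀ : 0 ≤ ε) (hε₂ : ε ≤ 2) {s : Finset ℕ}
    (hs : ∀ n ∈ s, (Nat.digits b n).length = k ∧ ε ≤ digitDeviation b d n) :
    (#s : ℝ) ≤ 2 * b ^ k * exp (-(k * ε ^ 2 / 4)) := by
  have hb₀ : 0 < b := by omega
  let digitString (n : ℕ) : Fin k → Fin b := fun i => ⟨n / b ^ (i : ℕ) % b, Nat.mod_lt _ hb₀⟩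
  have hlt (n) (hn : n ∈ s) : n < b ^ k := (hs n hn).1 ▸ Nat.lt_base_pow_length_digits hb
  have hstring (n) (hn : n ∈ s) : digitString n = finFunctionFinEquiv.symm ⟨n, hlt n hn⟩ := by
    ext i
    simp [digitString, finFunctionFinEquiv_symm_apply_val]
  have hmaps (n) (hn : n ∈ s) : digitString n ∈
      ({f : Fin k → Fin b | k * ε ≤ |(#{i | f i = ⟨d, hd⟩} : ℝ) - k / Fintype.card (Fin b)|} :
        Finset _) := by
    obtain ⟨hlen, hdev⟩ := hs n hn
    have hcount : (#{i | digitString n i = ⟨d, hd⟩} : ℝ) = (Nat.digits b n).count d := by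
      simp [Nat.count_digits_eq_card_filter hb hlen, digitString, Fin.ext_iff]
    rw [mem_filter, Fintype.card_fin, hcount]
    refine ⟨mem_univ _, ?_⟩
    rw [digitDeviation, hlen] at hdev
    have hk : (k : ℝ) = 0 → ((Nat.digits b n).count d : ℝ) = 0 := fun hk => by
      rw [Nat.cast_eq_zero, ← hlen, List.length_eq_zero_iff] at hk
      simp [hk]
    calc k * ε ≤ k * |((Nat.digits b n).count d : ℝ) / k - 1 / b| := by gcongr
      _ = |k * (((Nat.digits b n).count d : ℝ) / k - 1 / b)| := by rw [abs_mul, Nat.abs_cast]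
      _ = |((Nat.digits b n).count d : ℝ) - k / b| := by
        rw [mul_sub, mul_div_cancel_of_imp' hk, mul_one_div]
  calc (#s : ℝ)
      ≤ #{f : Fin k → Fin b | k * ε ≤ |(#{i | f i = ⟨d, hd⟩} : ℝ) - k / Fintype.card (Fin b)|} := by
        refine Nat.cast_le.2 (card_le_card_of_injOn digitString hmaps fun n hn m hm hnm => ?_)
        rw [hstring n hn, hstring m hm] at hnm
        exact congrArg Fin.val (finFunctionFinEquiv.symm.injective hnm)
    _ ≤ 2 * b ^ k * exp (-(k * ε ^ 2 / 4)) := by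
        simpa using card_filter_le_abs_card_filter_sub_le k (⟨d, hd⟩ : Fin b) hε₀ hε₂

theorem card_filter_le_digitDeviation_le {b d N : ℕ} (hb : 1 < b) (hd : d < b) {ε : ℝ}
    (hε₀ : 0 ≤ ε) (hε₁ : ε ≤ 1) :
    (#{n ∈ Icc 1 N | ε ≤ digitDeviation b d n} : ℝ) ≤
      2 * (Nat.digits b N).length * ((b : ℝ) * exp (-(ε ^ 2 / 4))) ^ (Nat.digits b N).length := by
  set K := (Nat.digits b N).length
  have hρ : 1 ≤ (b : ℝ) * exp (-(ε ^ 2 / 4)) := by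
    have hlog : ε ^ 2 / 4 ≤ log b := calc
      ε ^ 2 / 4 ≤ 0.6931471803 := by nlinarith
      _ ≤ log 2 := log_two_gt_d9.le
      _ ≤ log b := log_le_log two_pos (by exact_mod_cast hb)
    rw [exp_neg, ← div_eq_mul_inv, one_le_div (exp_pos _), ← exp_log (by positivity : (0 : ℝ) < b)]
    exact exp_le_exp.2 hlog
  have hlen (n) (hn : n ∈ {n ∈ Icc 1 N | ε ≤ digitDeviation b d n}) :
      (Nat.digits b n).length ∈ Icc 1 K := by
    obtain ⟨hn, -⟩ := mem_filter.1 hn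
    exact mem_Icc.2 ⟨List.length_pos_iff.2 (Nat.digits_ne_nil_iff_ne_zero.2 (by grind)),
      Nat.le_length_digits_le b n N (mem_Icc.1 hn).2⟩
  rw [card_eq_sum_card_fiberwise hlen]
  push_cast
  calc ∑ k ∈ Icc 1 K, (#{n ∈ {n ∈ Icc 1 N | ε ≤ digitDeviation b d n} |
        (Nat.digits b n).length = k} : ℝ)
      ≤ ∑ k ∈ Icc 1 K, 2 * ((b : ℝ) * exp (-(ε ^ 2 / 4))) ^ k := sum_le_sum fun k _ => by
        rw [mul_pow, ← exp_nat_mul, ← mul_assoc, mul_neg, ← mul_div_assoc]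
        refine card_le_of_le_digitDeviation hb hd hε₀ (by linarith) fun n hn => ?_
        simp only [mem_filter] at hn
        exact ⟨hn.2, hn.1.2⟩
    _ ≤ ∑ k ∈ Icc 1 K, 2 * ((b : ℝ) * exp (-(ε ^ 2 / 4))) ^ K := sum_le_sum fun k hk => by
        gcongr
        exact (mem_Icc.1 hk).2
    _ = 2 * K * ((b : ℝ) * exp (-(ε ^ 2 / 4))) ^ K := by
        rw [sum_const, Nat.card_Icc, nsmul_eq_mul]
        push_cast
        ring

theorem mul_exp_neg_pow_length_digits_le {b N : ℕ} (hb : 1 < b) (hN : N ≠ 0) {s : ℝ}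
    (hs : 0 ≤ s) :
    ((b : ℝ) * exp (-s)) ^ (Nat.digits b N).length ≤ b * (N : ℝ) ^ (1 - s / log b) := by
  set K := (Nat.digits b N).length
  have hlogb : 0 < log b := log_pos (by exact_mod_cast hb)
  have hNpos : (0 : ℝ) < N := by positivity
  have hbK : (b : ℝ) ^ K ≤ b * N := by exact_mod_cast Nat.base_pow_length_digits_le b N hb hN
  have hexp : exp (-(K * s)) ≤ N ^ (-(s / log b)) := calc
    exp (-(K * s)) = ((b : ℝ) ^ K) ^ (-(s / log b)) := by
      rw [rpow_def_of_pos (by positivity), log_pow]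
      congr 1
      field_simp
    _ ≤ N ^ (-(s / log b)) := rpow_le_rpow_of_nonpos hNpos
      (by exact_mod_cast (Nat.lt_base_pow_length_digits hb).le) (neg_nonpos.2 (by positivity))
  calc ((b : ℝ) * exp (-s)) ^ K = (b : ℝ) ^ K * exp (-(K * s)) := by
        rw [mul_pow, ← exp_nat_mul, mul_neg]
    _ ≤ b * N * N ^ (-(s / log b)) := by gcongr
    _ = b * N ^ (1 - s / log b) := by rw [sub_eq_add_neg, rpow_add hNpos, rpow_one, mul_assoc]

open Classical in
theorem card_filter_exists_le_digitDeviation_le {b N : ℕ} (hb : 1 < b) (hN : N ≠ 0) {ε : ℝ}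
    (hε₀ : 0 ≤ ε) (hε₁ : ε ≤ 1) :
    (#{n ∈ Icc 1 N | ∃ d < b, ε ≤ digitDeviation b d n} : ℝ) ≤
      2 * b ^ 2 * (Nat.digits b N).length * (N : ℝ) ^ (1 - ε ^ 2 / 4 / log b) := by
  set K := (Nat.digits b N).length
  have hsub : {n ∈ Icc 1 N | ∃ d < b, ε ≤ digitDeviation b d n} ⊆
      (range b).biUnion fun d => {n ∈ Icc 1 N | ε ≤ digitDeviation b d n} := by
    intro n hn
    simp only [mem_filter, mem_biUnion, mem_range] at hn ⊢
    grind
  calc (#{n ∈ Icc 1 N | ∃ d < b, ε ≤ digitDeviation b d n} : ℝ)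
      ≤ ∑ d ∈ range b, (#{n ∈ Icc 1 N | ε ≤ digitDeviation b d n} : ℝ) := by
        exact_mod_cast (card_le_card hsub).trans card_biUnion_le
    _ ≤ ∑ d ∈ range b, 2 * K * ((b : ℝ) * exp (-(ε ^ 2 / 4))) ^ K :=
        sum_le_sum fun d hd => card_filter_le_digitDeviation_le hb (mem_range.1 hd) hε₀ hε₁
    _ ≤ b * (2 * K * (b * N ^ (1 - ε ^ 2 / 4 / log b))) := by
        rw [sum_const, card_range, nsmul_eq_mul]
        gcongr
        exact mul_exp_neg_pow_length_digits_le hb hN (by positivity)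
    _ = 2 * b ^ 2 * K * N ^ (1 - ε ^ 2 / 4 / log b) := by ring

theorem eventually_mul_length_digits_le_rpow {b : ℕ} (hb : 1 < b) {C δ : ℝ} (hC : 0 ≤ C)
    (hδ : 0 < δ) : ∀ᶠ N : ℕ in atTop, C * (Nat.digits b N).length ≤ (N : ℝ) ^ δ := by
  have hlogb : logb b =o[atTop] fun x => x ^ δ :=
    ((isLittleO_log_rpow_atTop hδ).const_mul_left (log b)⁻¹).congr_left fun x => by
      rw [logb, div_eq_inv_mul]
  have hlittle : (fun x : ℝ => C * (logb b x + 1)) =o[atTop] fun x => x ^ δ :=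
    (hlogb.add (isLittleO_const_left.2 (Or.inr
      (tendsto_norm_atTop_atTop.comp (tendsto_rpow_atTop hδ))))).const_mul_left C
  have hreal : ∀ᶠ x : ℝ in atTop, C * (logb b x + 1) ≤ x ^ δ := by
    filter_upwards [hlittle.bound one_pos, eventually_ge_atTop 0] with x hx hx₀
    rw [one_mul, norm_of_nonneg (rpow_nonneg hx₀ δ)] at hx
    exact (le_norm_self _).trans hx
  filter_upwards [tendsto_natCast_atTop_atTop.eventually hreal, eventually_ne_atTop 0]
    with N hN hN₀
  refine le_trans (mul_le_mul_of_nonneg_left ?_ hC) hN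
  rw [Nat.length_digits b N hb hN₀, Nat.cast_add_one]
  exact add_le_add_left (natLog_le_logb N b) 1

open Classical in
theorem stmt_5 (b : ℕ) (hb : 2 ≤ b) :
    ∃ c : ℝ, 0 < c ∧ ∀ ε : ℝ, 0 < ε → ∃ N₀ : ℕ, ∀ N : ℕ, N₀ ≤ N →
      (((Finset.Icc 1 N).filter (fun n : ℕ =>
          ∃ d : ℕ, d < b ∧
            ε ≤ |((Nat.digits b n).count d : ℝ) / ((Nat.digits b n).length : ℝ)
                  - 1 / (b : ℝ)|)).card : ℝ)
        ≤ (N : ℝ) ^ ((1 : ℝ) - c * ε ^ 2) := by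
  have hlogb : 0 < log b := log_pos (by exact_mod_cast hb)
  refine ⟨1 / (8 * log b), by positivity, fun ε hε => ?_⟩
  rcases lt_or_ge 1 ε with hε₁ | hε₁
  · refine ⟨0, fun N _ => ?_⟩
    rw [filter_false_of_mem fun n _ ⟨d, _, hdev⟩ =>
      lt_irrefl ε ((hdev.trans_lt (digitDeviation_lt_one hb d n)).trans hε₁), card_empty,
      Nat.cast_zero]
    positivity
  have hδ : 0 < 1 / (8 * log b) * ε ^ 2 := by positivity
  obtain ⟨N₀, hN₀⟩ := eventually_atTop.1
    ((eventually_mul_length_digits_le_rpow hb (by positivity : (0 : ℝ) ≤ 2 * b ^ 2) hδ).and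
      (eventually_ne_atTop 0))
  refine ⟨N₀, fun N hN => ?_⟩
  obtain ⟨hlen, hN0⟩ := hN₀ N hN
  calc _ ≤ 2 * b ^ 2 * (Nat.digits b N).length * (N : ℝ) ^ (1 - ε ^ 2 / 4 / log b) :=
        card_filter_exists_le_digitDeviation_le hb hN0 hε.le hε₁
    _ ≤ N ^ (1 / (8 * log b) * ε ^ 2) * N ^ (1 - ε ^ 2 / 4 / log b) := by gcongr
    _ = N ^ (1 - 1 / (8 * log b) * ε ^ 2) := by
        rw [← rpow_add (by positivity)]
        congr 1
        ring
end

section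
/- Let n ≥ 2 be an integer and let c > 0 be a real number such that f(n) ≤ c·log₃(n). If a is a positive integer with 1 ≤ a ≤ n/2 and f(n) = f(a) + f(n − a), then a ≤ 2·n^{c/3 − 1}. -/
/-- `CanRepr n k` means the positive integer `n` can be built from exactly `k` ones
using additions and multiplications. -/
inductive CanRepr : ℕ → ℕ → Prop
  | one : CanRepr 1 1
  | add : ∀ {a b j k : ℕ}, CanRepr a j → CanRepr b k → CanRepr (a + b) (j + k)
  | mul : ∀ {a b j k : ℕ}, CanRepr a j → CanRepr b k → CanRepr (a * b) (j + k)

/-- The integer complexity `f(n)`: the least number of 1's needed to express `n`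
using 1's, `+`, `*`, and parentheses. -/
noncomputable def complexity (n : ℕ) : ℕ := sInf {k | CanRepr n k}

lemma key1 (b j k : ℕ) (hb : 1 ≤ b) (hj : 1 ≤ j) (hk : 1 ≤ k)
    (hbk : b ^ 3 ≤ 3 ^ k) : (1 + b) ^ 3 ≤ 3 ^ (j + k) := by
  rcases Nat.lt_or_ge b 3 with h3 | h3
  · interval_cases b
    · calc (1 + 1) ^ 3 ≤ 3 ^ 2 := by norm_num
        _ ≤ 3 ^ (j + k) := Nat.pow_le_pow_right (by norm_num) (by omega)
    · have hk2 : 2 ≤ k := by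
        by_contra h
        interval_cases k <;> simp_all <;> omega
      calc (1 + 2) ^ 3 ≤ 3 ^ 3 := by norm_num
        _ ≤ 3 ^ (j + k) := Nat.pow_le_pow_right (by norm_num) (by omega)
  · have h1 : (1 + b) ^ 3 ≤ 3 * b ^ 3 := by nlinarith [sq_nonneg b, sq_nonneg (b-3)]
    calc (1 + b) ^ 3 ≤ 3 * b ^ 3 := h1
      _ ≤ 3 ^ j * 3 ^ k := by
          have : (3:ℕ) ≤ 3 ^ j := by
            calc (3:ℕ) = 3 ^ 1 := by norm_num
              _ ≤ 3 ^ j := Nat.pow_le_pow_right (by norm_num) hj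
          exact Nat.mul_le_mul this hbk
      _ = 3 ^ (j + k) := (pow_add 3 j k).symm

lemma key (A B j k : ℕ) (hA : 1 ≤ A) (hB : 1 ≤ B) (hj : 1 ≤ j) (hk : 1 ≤ k)
    (hAj : A ^ 3 ≤ 3 ^ j) (hBk : B ^ 3 ≤ 3 ^ k) : (A + B) ^ 3 ≤ 3 ^ (j + k) := by
  rcases Nat.lt_or_ge A 2 with h2 | h2
  · interval_cases A
    exact key1 B j k hB hj hk hBk
  rcases Nat.lt_or_ge B 2 with h2' | h2'
  · interval_cases B
    have := key1 A k j hA hk hj hAj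
    rw [show A + 1 = 1 + A by ring, show j + k = k + j by ring]
    exact this
  · have hab : A + B ≤ A * B := by nlinarith
    calc (A + B) ^ 3 ≤ (A * B) ^ 3 := Nat.pow_le_pow_left hab 3
      _ = A ^ 3 * B ^ 3 := by ring
      _ ≤ 3 ^ j * 3 ^ k := Nat.mul_le_mul hAj hBk
      _ = 3 ^ (j + k) := (pow_add 3 j k).symm

lemma canRepr_bounds {n k : ℕ} (h : CanRepr n k) :
    1 ≤ n ∧ 1 ≤ k ∧ n ^ 3 ≤ 3 ^ k := by
  induction h with
  | one => norm_num
  | add ha hb iha ihb =>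
      obtain ⟨a1, j1, haj⟩ := iha
      obtain ⟨b1, k1, hbk⟩ := ihb
      exact ⟨by omega, by omega, key _ _ _ _ a1 b1 j1 k1 haj hbk⟩
  | mul ha hb iha ihb =>
      obtain ⟨a1, j1, haj⟩ := iha
      obtain ⟨b1, k1, hbk⟩ := ihb
      refine ⟨Nat.one_le_iff_ne_zero.mpr (by positivity), by omega, ?_⟩
      calc (_ * _) ^ 3 = _ ^ 3 * _ ^ 3 := by ring
        _ ≤ 3 ^ _ * 3 ^ _ := Nat.mul_le_mul haj hbk
        _ = 3 ^ (_ + _) := (pow_add 3 _ _).symm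

lemma canRepr_self (n : ℕ) (h : 1 ≤ n) : CanRepr n n := by
  induction n with
  | zero => omega
  | succ m ih =>
      rcases Nat.eq_or_lt_of_le h with h1 | h1
      · rw [← h1]; exact CanRepr.one
      · have := ih (by omega)
        exact CanRepr.add this CanRepr.one

lemma complexity_mem {n : ℕ} (h : 1 ≤ n) : CanRepr n (complexity n) :=
  Nat.sInf_mem ⟨n, canRepr_self n h⟩

lemma complexity_log_bound {n : ℕ} (h : 1 ≤ n) :
    3 * Real.logb 3 n ≤ (complexity n : ℝ) := by
  obtain ⟨-, hk1, hcube⟩ := canRepr_bounds (complexity_mem h)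
  have hcast : ((n : ℝ)) ^ 3 ≤ (3 : ℝ) ^ (complexity n) := by exact_mod_cast hcube
  have hn0 : (0 : ℝ) < n := by exact_mod_cast h
  have hlog := Real.logb_le_logb_of_le (by norm_num : (1:ℝ) < 3) (by positivity) hcast
  rw [Real.logb_pow, Real.logb_pow, Real.logb_self_eq_one (by norm_num : (1:ℝ) < 3),
    mul_one] at hlog
  exact_mod_cast hlog

theorem stmt_7 (n : ℕ) (hn : 2 ≤ n) (c : ℝ) (hc : 0 < c)
    (hf : (complexity n : ℝ) ≤ c * Real.logb 3 n)
    (a : ℕ) (ha1 : 1 ≤ a) (ha2 : (a : ℝ) ≤ (n : ℝ) / 2)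
    (hsum : complexity n = complexity a + complexity (n - a)) :
    (a : ℝ) ≤ 2 * (n : ℝ) ^ (c / 3 - 1) := by
  have hn0 : (0:ℝ) < n := by exact_mod_cast Nat.lt_of_lt_of_le Nat.zero_lt_two hn
  have hn2 : (2:ℝ) ≤ n := by exact_mod_cast hn
  have ha0 : (0:ℝ) < a := by exact_mod_cast ha1
  have hlt : a < n := by
    have : (a:ℝ) < n := by linarith
    exact_mod_cast this
  have hBcast : ((n - a : ℕ) : ℝ) = (n:ℝ) - a := by
    push_cast [Nat.cast_sub hlt.le]; ring
  have hB1 : 1 ≤ n - a := by omega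
  have hB0 : (0:ℝ) < ((n - a : ℕ) : ℝ) := by exact_mod_cast hB1
  have h1 := complexity_log_bound ha1
  have h2 := complexity_log_bound hB1
  have hsum' : (complexity n : ℝ) = (complexity a : ℝ) + (complexity (n - a) : ℝ) := by
    exact_mod_cast hsum
  have hB2 : (n:ℝ)/2 ≤ ((n - a : ℕ) : ℝ) := by rw [hBcast]; linarith
  have hlogB : Real.logb 3 ((n:ℝ)/2) ≤ Real.logb 3 ((n - a : ℕ) : ℝ) :=
    Real.logb_le_logb_of_le (by norm_num) (by linarith) hB2
  have hdiv : Real.logb 3 ((n:ℝ)/2) = Real.logb 3 n - Real.logb 3 2 :=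
    Real.logb_div (ne_of_gt hn0) two_ne_zero
  have key : Real.logb 3 (a:ℝ) ≤ (c/3 - 1) * Real.logb 3 n + Real.logb 3 2 := by
    nlinarith [h1, h2, hlogB, hdiv, hf, hsum']
  have hexp := (Real.rpow_le_rpow_left_iff (by norm_num : (1:ℝ) < 3)).mpr key
  rw [Real.rpow_logb (by norm_num) (by norm_num) ha0] at hexp
  calc (a:ℝ) ≤ (3:ℝ) ^ ((c/3 - 1) * Real.logb 3 n + Real.logb 3 2) := hexp
    _ = 2 * (n:ℝ) ^ (c/3 - 1) := by
        rw [Real.rpow_add (by norm_num : (0:ℝ) < 3),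
          Real.rpow_logb (by norm_num) (by norm_num) (by norm_num : (0:ℝ) < 2),
          mul_comm (c/3 - 1) (Real.logb 3 (n:ℝ)),
          Real.rpow_mul (by norm_num : (0:ℝ) ≤ 3),
          Real.rpow_logb (by norm_num) (by norm_num) hn0, mul_comm]
end

section
/- Let n be a positive integer whose binary representation (with no leading zeros) contains exactly s ones and z zeros (so s ≥ 1). Then f(n) ≤ 3s + 2z − 2. -/
/-! Horner's scheme in base 2: reading the binary digits of `n` from the top, the leading
`1` costs one 1, and every further digit `b` turns `m` into `b + (1 + 1) * m`, which costs
two more 1's for the doubling and one more if `b = 1`. -/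

open Nat

namespace CanRepr

theorem two : CanRepr 2 2 := one.add one

theorem bit {m k b : ℕ} (hb : b < 2) (h : CanRepr m k) : CanRepr (b + 2 * m) (k + 2 + b) := by
  interval_cases b
  · convert two.mul h using 1 <;> omega
  · convert one.add (two.mul h) using 1; omega

end CanRepr

theorem complexity_le_of_canRepr {n k : ℕ} (h : CanRepr n k) : complexity n ≤ k :=
  Nat.sInf_le h

theorem one_le_count_one_digits_two {n : ℕ} (hn : n ≠ 0) : 1 ≤ (digits 2 n).count 1 := by
  have hne : digits 2 n ≠ [] := digits_ne_nil_iff_ne_zero.mpr hn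
  have hlast : (digits 2 n).getLast hne = 1 := by
    have hlt := digits_lt_base one_lt_two (List.getLast_mem hne)
    have hpos := getLast_digit_ne_zero 2 hn
    omega
  exact List.count_pos_iff.mpr (hlast ▸ List.getLast_mem hne)

theorem canRepr_digits_two {n : ℕ} (hn : 0 < n) :
    CanRepr n (3 * (digits 2 n).count 1 + 2 * (digits 2 n).count 0 - 2) := by
  induction n using Nat.strong_induction_on with
  | _ n ih =>
  obtain rfl | hn1 := eq_or_ne n 1
  · exact .one
  have hm : 0 < n / 2 := by omega
  have hrepr := (ih (n / 2) (by omega) hm).bit (n.mod_lt two_pos)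
  -- the `- 2` truncates unless `n / 2` has a digit 1
  have hcount := one_le_count_one_digits_two hm.ne'
  rw [Nat.mod_add_div] at hrepr
  rw [digits_def' one_lt_two hn]
  convert hrepr using 1
  rcases Nat.mod_two_eq_zero_or_one n with h | h <;>
    simp only [h, List.count_cons_self, List.count_cons_of_ne, ne_eq, zero_ne_one, one_ne_zero,
      not_false_eq_true] <;> omega

theorem stmt_10 (n : ℕ) (hn : 0 < n) (s z : ℕ)
    (hs : s = (Nat.digits 2 n).count 1) (hz : z = (Nat.digits 2 n).count 0) :
    complexity n ≤ 3 * s + 2 * z - 2 := by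
  subst hs hz
  exact complexity_le_of_canRepr (canRepr_digits_two hn)
end

section
/- Let n ≥ 2 be an integer whose binary representation has exactly k digits, of which at most 0.54·k are ones. Then f(n) ≤ 2.54·k, and consequently f(n) ≤ 2.54·(log₂(n) + 1). -/
lemma canRepr_key : ∀ n : ℕ, 1 ≤ n → ∃ m, CanRepr n m ∧
    m + 2 ≤ 2 * (Nat.digits 2 n).length + (Nat.digits 2 n).count 1 := by
  intro n
  induction n using Nat.strong_induction_on with
  | _ n ih =>
    intro hn
    rcases eq_or_lt_of_le hn with h1 | h2
    · subst h1
      refine ⟨1, CanRepr.one, ?_⟩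
      simp
    · -- n ≥ 2
      set q := n / 2 with hq
      have hq1 : 1 ≤ q := Nat.one_le_div_iff (by norm_num) |>.2 h2
      have hqlt : q < n := Nat.div_lt_self (by omega) (by norm_num)
      obtain ⟨m, hm, hle⟩ := ih q hqlt hq1
      have hdig : Nat.digits 2 n = (n % 2) :: Nat.digits 2 q := by
        rw [Nat.digits_def' (by norm_num) (by omega)]
      have hn2 : n % 2 = 0 ∨ n % 2 = 1 := Nat.mod_two_eq_zero_or_one n
      rcases hn2 with h0 | h1
      · refine ⟨m + 2, ?_, ?_⟩
        · have : n = (1 + 1) * q := by omega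
          rw [this, Nat.add_comm m 2]
          exact CanRepr.mul (CanRepr.add CanRepr.one CanRepr.one) hm
        · rw [hdig, h0]
          simp [List.count_cons]
          omega
      · refine ⟨m + 3, ?_, ?_⟩
        · have : n = (1 + 1) * q + 1 := by omega
          rw [this]
          have := CanRepr.add (CanRepr.mul (CanRepr.add CanRepr.one CanRepr.one) hm)
            CanRepr.one
          have h3 : (1:ℕ) + 1 + m + 1 = m + 3 := by omega
          exact h3 ▸ this
        · rw [hdig, h1]
          simp [List.count_cons]
          omega

theorem stmt_11 (n : ℕ) (hn : 2 ≤ n) (k : ℕ) (hk : k = (Nat.digits 2 n).length)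
    (hones : ((Nat.digits 2 n).count 1 : ℝ) ≤ 0.54 * (k : ℝ)) :
    (complexity n : ℝ) ≤ 2.54 * (k : ℝ) ∧
    (complexity n : ℝ) ≤ 2.54 * (Real.logb 2 n + 1) := by
  obtain ⟨m, hm, hle⟩ := canRepr_key n (by omega)
  have hc : complexity n ≤ m := Nat.sInf_le hm
  have hck : (complexity n : ℝ) ≤ 2.54 * (k : ℝ) := by
    have h1 : (complexity n : ℝ) ≤ (m : ℝ) := by exact_mod_cast hc
    have h2 : (m : ℝ) + 2 ≤ 2 * (k : ℝ) + ((Nat.digits 2 n).count 1 : ℝ) := by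
      rw [hk]; exact_mod_cast hle
    nlinarith
  refine ⟨hck, hck.trans ?_⟩
  have hklog : (k : ℝ) ≤ Real.logb 2 n + 1 := by
    rw [hk, Nat.digits_len 2 n (by norm_num) (by omega)]
    push_cast
    have := Real.natLog_le_logb n 2
    norm_num at this
    linarith
  nlinarith
end
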